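/- There exists a constant C > 0 such that for all ε, τ, t with 0 < ε ≤ τ ≤ t/2, one has | ∫_{B_τ(te₁)} ∇U_{ε,te₁}(y)·∇U_{ε,−te₁}(y) dy | ≤ C·ε²·τ/t³. -/

import Mathlib

noncomputable section

open MeasureTheory Real RealInnerProductSpace

/-- Euclidean four-space. -/
abbrev E4 : Type := EuclideanSpace ℝ (Fin 4)

/-- The normalizing constant `c₄ = (6/π²)^(1/4)`. -/
def c4 : ℝ := (6 / Real.pi ^ 2) ^ ((1 : ℝ) / 4)

/-- The Sobolev constant `S₄ = 8/c₄²`. -/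
def S4 : ℝ := 8 / c4 ^ 2

/-- The standard (normalized) bubble `U(x) = c₄ (1+|x|²)⁻¹`. -/
def Ubub (x : E4) : ℝ := c4 * (1 + ‖x‖ ^ 2)⁻¹

/-- The rescaled/translated bubble `U_{ε,x₀}(x) = ε⁻¹ U((x - x₀)/ε)`. -/
def Ueps (ε : ℝ) (x₀ : E4) (x : E4) : ℝ := ε⁻¹ * Ubub (ε⁻¹ • (x - x₀))

/-- The double bubble `Û_{ε,x₀} = U_{ε,x₀} + U_{ε,-x₀}`. -/
def Uhat (ε : ℝ) (x₀ : E4) (x : E4) : ℝ := Ueps ε x₀ x + Ueps ε (-x₀) x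

/-- The first standard basis vector of `ℝ⁴`. -/
def e1 : E4 := EuclideanSpace.single (0 : Fin 4) (1 : ℝ)

/-- The Yamabe (Sobolev) quotient `Q(u) = 6 ∫ |∇u|² / (∫ u⁴)^{1/2}` on `ℝ⁴`. -/
def Qyam (u : E4 → ℝ) : ℝ :=
  6 * (∫ x : E4, ‖gradient u x‖ ^ 2) / Real.sqrt (∫ x : E4, (u x) ^ 4)

/-!
Explicitly `|∇U_{ε,x₀}(y)| = 2c₄ε r/(ε² + r²)²` with `r = |y - x₀|`. On `B_τ(te₁)` the point `y`
stays at distance at least `t` from `-te₁`, so the second gradient is at most `2c₄ε/t³`. The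
first one satisfies `r³ |∇U_{ε,te₁}| ≤ 2c₄ε`, so in polar coordinates around `te₁` its integral
over `B_τ(te₁)` is at most `|S³| · 2c₄ε · τ`.
-/

open Metric Set Module

theorem setIntegral_ball_fun_norm_sub_le {E : Type*} [NormedAddCommGroup E] [NormedSpace ℝ E]
    [Nontrivial E] [FiniteDimensional ℝ E] [MeasurableSpace E] [BorelSpace E] (μ : Measure E)
    [μ.IsAddHaarMeasure] (x : E) {g : ℝ → ℝ} {τ M : ℝ} (hτ : 0 ≤ τ)
    (hg : ∀ r ∈ Ioo 0 τ, 0 ≤ g r) (hM : ∀ r ∈ Ioo 0 τ, r ^ (finrank ℝ E - 1) * g r ≤ M) :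
    ∫ y in ball x τ, g ‖y - x‖ ∂μ ≤ finrank ℝ E * μ.real (ball 0 1) * (M * τ) := by
  have h_translate : ∫ y in ball x τ, g ‖y - x‖ ∂μ = ∫ z in ball 0 τ, g ‖z‖ ∂μ := by
    have hpre : (· - x) ⁻¹' ball 0 τ = ball x τ := by ext; simp [dist_eq_norm]
    rw [← hpre]
    exact (measurePreserving_sub_right μ x).setIntegral_preimage_emb
      (measurableEmbedding_subRight x) (fun z => g ‖z‖) (ball 0 τ)
  have h_radial : ∫ z in ball 0 τ, g ‖z‖ ∂μ
      = finrank ℝ E * μ.real (ball 0 1) * ∫ r in Ioo 0 τ, r ^ (finrank ℝ E - 1) * g r := by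
    have h_ind : (ball (0 : E) τ).indicator (fun z => g ‖z‖) = fun z => (Iio τ).indicator g ‖z‖ := by
      ext z; simp [indicator]
    rw [← integral_indicator measurableSet_ball, h_ind, integral_fun_norm_addHaar μ, nsmul_eq_mul,
      smul_eq_mul, mul_assoc, ← Ioi_inter_Iio, ← setIntegral_indicator measurableSet_Iio]
    simp only [smul_eq_mul, indicator_mul_right]
  have h_radial_le : ∫ r in Ioo 0 τ, r ^ (finrank ℝ E - 1) * g r ≤ M * τ := by
    refine (le_abs_self _).trans ?_
    rw [← Real.norm_eq_abs]
    refine (norm_setIntegral_le_of_norm_le_const (C := M) measure_Ioo_lt_top fun r hr => ?_).trans_eq ?_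
    · rw [Real.norm_of_nonneg (mul_nonneg (pow_nonneg hr.1.le _) (hg r hr))]
      exact hM r hr
    · simp [hτ]
  rw [h_translate, h_radial]
  gcongr

lemma two_mul_norm_sub_le_norm_add {E : Type*} [SeminormedAddCommGroup E] [NormedSpace ℝ E]
    {c y : E} {τ : ℝ} (hy : y ∈ ball c τ) : 2 * ‖c‖ - τ ≤ ‖y + c‖ := by
  have h_tri := norm_sub_norm_le ((2 : ℝ) • c) (c - y)
  rw [norm_smul, Real.norm_two, norm_sub_rev] at h_tri
  rw [mem_ball_iff_norm] at hy
  rw [show y + c = (2 : ℝ) • c - (c - y) by module]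
  linarith

lemma c4_pos : 0 < c4 := by unfold c4; positivity

lemma Ueps_eq (ε : ℝ) (x₀ : E4) :
    Ueps ε x₀ = fun x => c4 * ε * (ε ^ 2 + ‖x - x₀‖ ^ 2)⁻¹ := by
  funext x
  rcases eq_or_ne ε 0 with rfl | hε
  · simp [Ueps]
  · have : 0 < ε ^ 2 + ‖x - x₀‖ ^ 2 := by positivity
    simp only [Ueps, Ubub, norm_smul, norm_inv, Real.norm_eq_abs, mul_pow]
    field_simp
    rw [sq_abs]
    ring

def bubbleSlope (ε r : ℝ) : ℝ := 2 * c4 * ε * r / (ε ^ 2 + r ^ 2) ^ 2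

lemma hasGradientAt_Ueps {ε : ℝ} (hε : ε ≠ 0) (x₀ y : E4) :
    HasGradientAt (Ueps ε x₀) ((-2 * c4 * ε / (ε ^ 2 + ‖y - x₀‖ ^ 2) ^ 2) • (y - x₀)) y := by
  rw [Ueps_eq]
  have hpos : 0 < ε ^ 2 + ‖y - x₀‖ ^ 2 := by positivity
  have hden : HasFDerivAt (fun x : E4 => ε ^ 2 + ‖x - x₀‖ ^ 2)
      (2 • (innerSL ℝ (y - x₀)).comp (ContinuousLinearMap.id ℝ E4)) y :=
    ((hasFDerivAt_id y).sub_const x₀).norm_sq.const_add _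
  rw [hasGradientAt_iff_hasFDerivAt]
  refine (((hasFDerivAt_inv hpos.ne').comp y hden).const_mul (c4 * ε)).congr_fderiv ?_
  ext w
  simp only [smul_apply, ContinuousLinearMap.comp_apply, ContinuousLinearMap.toSpanSingleton_apply,
    InnerProductSpace.toDual_apply_apply, coe_innerSL_apply, inner_smul_left, smul_eq_mul, nsmul_eq_mul,
    ContinuousLinearMap.id_apply, conj_trivial, Nat.cast_ofNat]
  field_simp

lemma norm_gradient_Ueps {ε : ℝ} (hε : 0 < ε) (x₀ y : E4) :
    ‖gradient (Ueps ε x₀) y‖ = bubbleSlope ε ‖y - x₀‖ := by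
  have := c4_pos
  rw [(hasGradientAt_Ueps hε.ne' x₀ y).gradient, norm_smul, Real.norm_eq_abs, abs_div,
    abs_of_neg (by nlinarith : -2 * c4 * ε < 0), abs_of_pos (by positivity), bubbleSlope]
  ring

lemma bubbleSlope_nonneg {ε r : ℝ} (hε : 0 ≤ ε) (hr : 0 ≤ r) : 0 ≤ bubbleSlope ε r := by
  have := c4_pos
  unfold bubbleSlope
  positivity

lemma pow_three_mul_bubbleSlope_le {ε : ℝ} (hε : 0 ≤ ε) (r : ℝ) :
    r ^ 3 * bubbleSlope ε r ≤ 2 * c4 * ε := by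
  have h : r ^ 4 / (ε ^ 2 + r ^ 2) ^ 2 ≤ 1 :=
    div_le_one_of_le₀ (by nlinarith [sq_nonneg ε, sq_nonneg r, sq_nonneg (ε * r)]) (by positivity)
  calc r ^ 3 * bubbleSlope ε r = 2 * c4 * ε * (r ^ 4 / (ε ^ 2 + r ^ 2) ^ 2) := by
        unfold bubbleSlope; ring
    _ ≤ 2 * c4 * ε := mul_le_of_le_one_right (by have := c4_pos; positivity) h

lemma bubbleSlope_le_of_le {ε t r : ℝ} (hε : 0 ≤ ε) (ht : 0 < t) (htr : t ≤ r) :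
    bubbleSlope ε r ≤ 2 * c4 * ε / t ^ 3 := by
  have := c4_pos
  rw [le_div_iff₀ (by positivity)]
  calc bubbleSlope ε r * t ^ 3 ≤ bubbleSlope ε r * r ^ 3 := by
        gcongr
        exact bubbleSlope_nonneg hε (ht.le.trans htr)
    _ ≤ 2 * c4 * ε := by rw [mul_comm]; exact pow_three_mul_bubbleSlope_le hε r

lemma continuous_bubbleSlope {ε : ℝ} (hε : ε ≠ 0) : Continuous (bubbleSlope ε) :=
  Continuous.div (by fun_prop) (by fun_prop) fun r => by positivity

lemma abs_inner_gradient_Ueps_le {ε t : ℝ} (hε : 0 < ε) (ht : 0 < t) {x₀ x₁ y : E4}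
    (hy : t ≤ ‖y - x₁‖) :
    |⟪gradient (Ueps ε x₀) y, gradient (Ueps ε x₁) y⟫|
      ≤ 2 * c4 * ε / t ^ 3 * bubbleSlope ε ‖y - x₀‖ := by
  calc |⟪gradient (Ueps ε x₀) y, gradient (Ueps ε x₁) y⟫|
      ≤ ‖gradient (Ueps ε x₀) y‖ * ‖gradient (Ueps ε x₁) y‖ := abs_real_inner_le_norm _ _
    _ ≤ bubbleSlope ε ‖y - x₀‖ * (2 * c4 * ε / t ^ 3) := by
        rw [norm_gradient_Ueps hε, norm_gradient_Ueps hε]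
        gcongr
        · exact bubbleSlope_nonneg hε.le (norm_nonneg _)
        · exact bubbleSlope_le_of_le hε.le ht hy
    _ = _ := mul_comm _ _

lemma setIntegral_ball_bubbleSlope_le {ε τ : ℝ} (hε : 0 < ε) (hτ : 0 ≤ τ) (c : E4) :
    ∫ y in ball c τ, bubbleSlope ε ‖y - c‖
      ≤ 4 * volume.real (ball (0 : E4) 1) * (2 * c4 * ε * τ) := by
  simpa only [finrank_euclideanSpace_fin, Nat.cast_ofNat] using
    setIntegral_ball_fun_norm_sub_le volume c hτ (fun r hr => bubbleSlope_nonneg hε.le hr.1.le)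
      (fun r _ => by simpa using pow_three_mul_bubbleSlope_le hε.le r)

lemma integrableOn_ball_bubbleSlope {ε : ℝ} (hε : ε ≠ 0) (c : E4) (τ : ℝ) :
    IntegrableOn (fun y => bubbleSlope ε ‖y - c‖) (ball c τ) :=
  (((continuous_bubbleSlope hε).comp (continuous_id.sub continuous_const).norm
    ).continuousOn.integrableOn_compact (isCompact_closedBall c τ)).mono_set ball_subset_closedBall

/-- There is `C > 0` such that for `0 < ε ≤ τ ≤ t/2`,
`|∫_{B_τ(te₁)} ∇U_{ε,te₁} · ∇U_{ε,-te₁}| ≤ C ε² τ/t³`. -/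
theorem stmt17 :
    ∃ C : ℝ, 0 < C ∧ ∀ ε τ t : ℝ, 0 < ε → ε ≤ τ → τ ≤ t / 2 →
      |∫ y in Metric.ball (t • e1) τ,
          ⟪gradient (Ueps ε (t • e1)) y, gradient (Ueps ε (-(t • e1))) y⟫|
        ≤ C * ε ^ 2 * τ / t ^ 3 := by
  have hvol : 0 < volume.real (ball (0 : E4) 1) :=
    ENNReal.toReal_pos (measure_ball_pos _ _ one_pos).ne' measure_ball_lt_top.ne
  refine ⟨16 * c4 ^ 2 * volume.real (ball (0 : E4) 1), by have := c4_pos; positivity, ?_⟩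
  intro ε τ t hε hετ hτt
  have ht : 0 < t := by linarith
  set c : E4 := t • e1
  have h_far : ∀ y ∈ ball c τ, t ≤ ‖y - -c‖ := fun y hy => by
    have hc : ‖c‖ = t := by simp [c, e1, norm_smul, abs_of_pos ht]
    rw [sub_neg_eq_add]
    linarith [two_mul_norm_sub_le_norm_add hy]
  rw [← Real.norm_eq_abs]
  calc _ ≤ ∫ y in ball c τ, 2 * c4 * ε / t ^ 3 * bubbleSlope ε ‖y - c‖ :=
        norm_integral_le_of_norm_le ((integrableOn_ball_bubbleSlope hε.ne' c τ).const_mul _)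
          ((ae_restrict_iff' measurableSet_ball).2 (.of_forall fun y hy =>
            abs_inner_gradient_Ueps_le hε ht (h_far y hy)))
    _ = 2 * c4 * ε / t ^ 3 * ∫ y in ball c τ, bubbleSlope ε ‖y - c‖ := integral_const_mul _ _
    _ ≤ 2 * c4 * ε / t ^ 3 * (4 * volume.real (ball (0 : E4) 1) * (2 * c4 * ε * τ)) := by
        have := c4_pos
        gcongr
        exact setIntegral_ball_bubbleSlope_le hε (hε.le.trans hετ) c
    _ = _ := by ring
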